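/- arXiv:1011.3361 — 2 statements merged into one kernel-verified Lean document; each statement's English description precedes it below -/
import Mathlib

section
/- Let T be a balanced tree with k levels (k ≥ 2) and L its graph Laplacian. If f is a nonzero function on the vertices with Lf = λf and f(root) ≠ 0, then there exists a nonzero stratified function g on the vertices with Lg = λg. -/
open scoped Classical

/-- Vertices of the balanced tree with `k` levels and branching sequence `c`:
a vertex at level `l` (`0 ≤ l ≤ k-1`) is a function assigning to each `i < l` a
label in `Fin (c i)` (the label of the level-`(i+1)` ancestor among its siblings). -/
abbrev BTVert (k : ℕ) (c : ℕ → ℕ) : Type := Σ l : Fin k, ∀ i : Fin l.val, Fin (c i.val)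

/-- `p` is the parent of `v` in the balanced tree. -/
def IsParentOf {k : ℕ} {c : ℕ → ℕ} (p v : BTVert k c) : Prop :=
  ∃ h : p.1.val + 1 = v.1.val,
    ∀ i : Fin p.1.val, v.2 ⟨i.val, by have := i.isLt; omega⟩ = p.2 i

/-- The balanced tree as a simple graph: each non-root vertex is adjacent to its parent. -/
def btGraph (k : ℕ) (c : ℕ → ℕ) : SimpleGraph (BTVert k c) where
  Adj u v := IsParentOf u v ∨ IsParentOf v u
  symm := ⟨fun u v h => h.symm⟩
  loopless := ⟨fun v h => by
    rcases h with ⟨h, -⟩ | ⟨h, -⟩ <;> omega⟩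

/-- The root (the unique vertex at level 0). -/
def btRoot (k : ℕ) (c : ℕ → ℕ) (hk : 0 < k) : BTVert k c :=
  ⟨⟨0, hk⟩, fun i => i.elim0⟩

/-- `u` belongs to the maximal subtree rooted at `v` (`u` is `v` or a descendant of `v`). -/
def InSubtree {k : ℕ} {c : ℕ → ℕ} (v u : BTVert k c) : Prop :=
  ∃ h : v.1.val ≤ u.1.val,
    ∀ i : Fin v.1.val, u.2 ⟨i.val, by have := i.isLt; omega⟩ = v.2 i

/-- A function on the vertices is stratified if it only depends on the level. -/
def Stratified {k : ℕ} {c : ℕ → ℕ} (f : BTVert k c → ℝ) : Prop :=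
  ∀ u v : BTVert k c, u.1 = v.1 → f u = f v

/-- Number of vertices at level `l`: `n(l) = c(0) ⋯ c(l-1)`. -/
def nlev (c : ℕ → ℕ) (l : ℕ) : ℕ := ∏ i ∈ Finset.range l, c i

/-- The common degree `d(l)` of the vertices at level `l`. -/
def branchDeg (k : ℕ) (c : ℕ → ℕ) (l : ℕ) : ℕ :=
  if l = 0 then c 0 else if l = k - 1 then 1 else c l + 1

/-- The symmetric tridiagonal matrix `T^{(l0)}` with diagonal `d(l0), …, d(k-1)` and
off-diagonal `√c(l0), …, √c(k-2)`. -/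
noncomputable def matT (k : ℕ) (c : ℕ → ℕ) (l0 : ℕ) :
    Matrix (Fin (k - l0)) (Fin (k - l0)) ℝ := fun i j =>
  if i = j then (branchDeg k c (l0 + i.val) : ℝ)
  else if i.val + 1 = j.val then Real.sqrt (c (l0 + i.val))
  else if j.val + 1 = i.val then Real.sqrt (c (l0 + j.val))
  else 0

/-- The tridiagonal matrix `S^{(l0)}` with diagonal `d(l0), …, d(k-1)`, subdiagonal
entries `-1` and superdiagonal entries `-c(l0), …, -c(k-2)`. -/
def matS (k : ℕ) (c : ℕ → ℕ) (l0 : ℕ) :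
    Matrix (Fin (k - l0)) (Fin (k - l0)) ℝ := fun i j =>
  if i = j then (branchDeg k c (l0 + i.val) : ℝ)
  else if i.val + 1 = j.val then -(c (l0 + i.val) : ℝ)
  else if j.val + 1 = i.val then -1
  else 0

/-- `lam` is an eigenvalue of the matrix `A`. -/
def IsEigenvalue {V : Type*} [Fintype V] (A : Matrix V V ℝ) (lam : ℝ) : Prop :=
  ∃ f : V → ℝ, f ≠ 0 ∧ A.mulVec f = lam • f

/-- The (geometric) multiplicity of `lam` as an eigenvalue of `A`. -/
noncomputable def eigMult {V : Type*} [Fintype V] (A : Matrix V V ℝ) (lam : ℝ) : ℕ :=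
  Module.finrank ℝ
    ↥(LinearMap.ker (A.mulVecLin - lam • (LinearMap.id : (V → ℝ) →ₗ[ℝ] (V → ℝ))))

/-- The Dirichlet Laplacian on a subset `Ω` of the vertices of the balanced tree:
the principal submatrix of the Laplacian with rows and columns indexed by `Ω`. -/
noncomputable def dirichletLap (k : ℕ) (c : ℕ → ℕ) (Ω : Set (BTVert k c)) :
    Matrix Ω Ω ℝ := fun u v => (btGraph k c).lapMatrix ℝ u.1 v.1

/-!
Summing an eigenfunction `f` over the levels gives a sequence `σ` with
`λ σ_l = d_l σ_l - c_{l-1} σ_{l-1} - σ_{l+1}`: every vertex of level `l + 1` has exactly one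
parent, and every vertex of level `l < k - 1` has `c_l` children. A stratified function with
level values `h_l` is an eigenfunction iff `λ h_l = d_l h_l - h_{l-1} - c_l h_{l+1}`, the
transposed recurrence. Rescaling by the number `M_l = c_l ⋯ c_{k-2}` of leaves below a level-`l`
vertex turns one recurrence into the other, so `h_l = M_l σ_l` works, and `h_0 = M_0 f(root) ≠ 0`.
-/

namespace BTVert

variable {k : ℕ} {c : ℕ → ℕ}

lemma ext_of_level {u v : BTVert k c} (hl : u.1.val = v.1.val)
    (hlab : ∀ i : Fin u.1.val, u.2 i = v.2 ⟨i.val, hl ▸ i.isLt⟩) : u = v := by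
  obtain ⟨⟨l, _⟩, a⟩ := u
  obtain ⟨⟨l', _⟩, b⟩ := v
  obtain rfl : l = l' := hl
  simpa [funext_iff] using hlab

/-- Forgets the last label; the root is its own `parent`. -/
def parent (v : BTVert k c) : BTVert k c :=
  ⟨⟨v.1.val - 1, by omega⟩, fun i => v.2 ⟨i.val, i.isLt.trans_le (Nat.sub_le _ _)⟩⟩

lemma isParentOf_iff {p v : BTVert k c} : IsParentOf p v ↔ 0 < v.1.val ∧ p = v.parent := by
  constructor
  · rintro ⟨hl, hlab⟩
    exact ⟨by omega, ext_of_level (by simp [parent]; omega) fun i => (hlab i).symm⟩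
  · rintro ⟨hv, rfl⟩
    exact ⟨by simp [parent]; omega, fun _ => rfl⟩

noncomputable def children (p : BTVert k c) : Finset (BTVert k c) :=
  Finset.univ.filter (IsParentOf p)

def child (p : BTVert k c) (hp : p.1.val + 1 < k) (a : Fin (c p.1.val)) : BTVert k c :=
  ⟨⟨p.1.val + 1, hp⟩, fun i =>
    if h : i.val < p.1.val then p.2 ⟨i.val, h⟩
    else Fin.cast (congrArg c (Nat.le_antisymm (not_lt.mp h) (Nat.lt_succ_iff.mp i.isLt))) a⟩

lemma child_injective (p : BTVert k c) (hp : p.1.val + 1 < k) :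
    Function.Injective (child p hp) := by
  intro a b hab
  have := congrFun (eq_of_heq (Sigma.mk.inj_iff.mp hab).2) ⟨p.1.val, Nat.lt_succ_self _⟩
  simpa [child, Fin.ext_iff] using this

lemma children_eq_image (p : BTVert k c) (hp : p.1.val + 1 < k) :
    p.children = Finset.univ.image (child p hp) := by
  ext w
  simp only [children, Finset.mem_filter, Finset.mem_univ, true_and, Finset.mem_image]
  constructor
  · rintro ⟨hl, hlab⟩
    refine ⟨w.2 ⟨p.1.val, by omega⟩, (ext_of_level hl.symm fun i => ?_).symm⟩
    simp only [child]
    split_ifs with hi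
    · exact hlab ⟨i.val, hi⟩
    · have hi : i = ⟨p.1.val, by omega⟩ := Fin.ext (show i.val = p.1.val by omega)
      exact Fin.ext (congrArg (fun j => (w.2 j).val) hi)
  · rintro ⟨a, rfl⟩
    exact ⟨rfl, fun i => by simp [child]⟩

lemma card_children (p : BTVert k c) :
    p.children.card = if p.1.val + 1 < k then c p.1.val else 0 := by
  split_ifs with hp
  · rw [children_eq_image p hp, Finset.card_image_of_injective _ (child_injective p hp),
      Finset.card_univ, Fintype.card_fin]
  · refine Finset.card_eq_zero.mpr (Finset.filter_false_of_mem fun w _ ⟨hl, _⟩ => ?_)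
    have := w.1.isLt
    omega

lemma sum_neighborFinset {M : Type*} [AddCommMonoid M] (F : BTVert k c → M) (v : BTVert k c) :
    ∑ w ∈ (btGraph k c).neighborFinset v, F w
      = (if 0 < v.1.val then F v.parent else 0) + ∑ w ∈ v.children, F w := by
  have hsplit : (btGraph k c).neighborFinset v
      = Finset.univ.filter (fun w => IsParentOf w v) ∪ v.children := by
    ext w
    rw [SimpleGraph.mem_neighborFinset]
    simp [children, btGraph, or_comm]
  have hdisj : Disjoint (Finset.univ.filter (fun w => IsParentOf w v)) v.children := by
    refine Finset.disjoint_filter.mpr fun w _ ⟨h₁, _⟩ ⟨h₂, _⟩ => ?_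
    omega
  rw [hsplit, Finset.sum_union hdisj, Finset.sum_filter]
  congr 1
  by_cases hv : 0 < v.1.val <;> simp [isParentOf_iff, hv]

lemma degree_eq_branchDeg (hk : 2 ≤ k) (v : BTVert k c) :
    (btGraph k c).degree v = branchDeg k c v.1.val := by
  rw [← SimpleGraph.card_neighborFinset_eq_degree, Finset.card_eq_sum_ones, sum_neighborFinset,
    ← Finset.card_eq_sum_ones, card_children, branchDeg]
  have := v.1.isLt
  generalize v.1.val = l at *
  split_ifs <;> subst_vars <;> omega

lemma lapMatrix_mulVec_apply_eq (hk : 2 ≤ k) (f : BTVert k c → ℝ) (v : BTVert k c) :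
    ((btGraph k c).lapMatrix ℝ).mulVec f v
      = branchDeg k c v.1.val * f v
        - ((if 0 < v.1.val then f v.parent else 0) + ∑ w ∈ v.children, f w) := by
  rw [SimpleGraph.lapMatrix_mulVec_apply, degree_eq_branchDeg hk, sum_neighborFinset]

end BTVert

section LevelSums

open BTVert

variable {k : ℕ} {c : ℕ → ℕ}

lemma lapMatrix_mulVec_comp_level (hk : 2 ≤ k) (h : ℕ → ℝ) (v : BTVert k c) :
    ((btGraph k c).lapMatrix ℝ).mulVec (fun u => h u.1.val) v
      = branchDeg k c v.1.val * h v.1.val - (if 0 < v.1.val then h (v.1.val - 1) else 0)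
        - (if v.1.val + 1 < k then c v.1.val * h (v.1.val + 1) else 0) := by
  have hchildren : ∑ w ∈ v.children, h w.1.val = v.children.card * h (v.1.val + 1) := by
    rw [← nsmul_eq_mul, ← Finset.sum_const]
    exact Finset.sum_congr rfl fun w hw => by rw [(Finset.mem_filter.mp hw).2.1]
  rw [lapMatrix_mulVec_apply_eq hk, hchildren, card_children]
  simp only [parent]
  split_ifs <;> push_cast <;> ring

variable (k c) in
noncomputable def levelFinset (l : ℕ) : Finset (BTVert k c) :=
  Finset.univ.filter (fun u => u.1.val = l)

noncomputable def levelSum (f : BTVert k c → ℝ) (l : ℕ) : ℝ :=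
  ∑ u ∈ levelFinset k c l, f u

lemma levelFinset_zero (hk : 0 < k) : levelFinset k c 0 = {btRoot k c hk} := by
  ext u
  simp only [levelFinset, Finset.mem_filter, Finset.mem_univ, true_and, Finset.mem_singleton]
  exact ⟨fun hu => ext_of_level hu fun i => absurd i.isLt (by omega), fun hu => hu ▸ rfl⟩

lemma levelFinset_eq_empty {l : ℕ} (hl : k ≤ l) : levelFinset k c l = ∅ :=
  Finset.filter_false_of_mem fun u _ hu => by have := u.1.isLt; omega

lemma sum_levelFinset_succ {M : Type*} [AddCommMonoid M] (F : BTVert k c → M) (l : ℕ) :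
    ∑ u ∈ levelFinset k c (l + 1), F u = ∑ p ∈ levelFinset k c l, ∑ u ∈ p.children, F u := by
  have hmaps : ∀ u ∈ levelFinset k c (l + 1), u.parent ∈ levelFinset k c l := fun u hu => by
    simp only [levelFinset, Finset.mem_filter] at hu ⊢
    simp [parent, hu.2]
  rw [← Finset.sum_fiberwise_of_maps_to hmaps]
  refine Finset.sum_congr rfl fun p hp => Finset.sum_congr ?_ fun _ _ => rfl
  ext u
  simp only [levelFinset, children, Finset.mem_filter, Finset.mem_univ, true_and,
    isParentOf_iff] at hp ⊢
  constructor
  · rintro ⟨hu, rfl⟩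
    exact ⟨by omega, rfl⟩
  · rintro ⟨hu, rfl⟩
    refine ⟨?_, rfl⟩
    change u.1.val - 1 = l at hp
    omega

lemma sum_levelFinset_succ_parent (F : BTVert k c → ℝ) {l : ℕ} (hl : l + 1 < k) :
    ∑ u ∈ levelFinset k c (l + 1), F u.parent = c l * ∑ p ∈ levelFinset k c l, F p := by
  rw [sum_levelFinset_succ, Finset.mul_sum]
  refine Finset.sum_congr rfl fun p hp => ?_
  have hpl : p.1.val = l := (Finset.mem_filter.mp hp).2
  have hchildren : ∀ u ∈ p.children, F u.parent = F p := fun u hu => by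
    rw [(isParentOf_iff.mp (Finset.mem_filter.mp hu).2).2]
  rw [Finset.sum_congr rfl hchildren, Finset.sum_const, card_children, if_pos (by omega), hpl,
    nsmul_eq_mul]

lemma levelSum_lapMatrix_mulVec (hk : 2 ≤ k) (f : BTVert k c → ℝ) {l : ℕ} (hl : l < k) :
    levelSum (((btGraph k c).lapMatrix ℝ).mulVec f) l
      = branchDeg k c l * levelSum f l
        - (if 0 < l then c (l - 1) * levelSum f (l - 1) else 0)
        - (if l + 1 < k then levelSum f (l + 1) else 0) := by
  have hlevel : ∀ u ∈ levelFinset k c l, ((btGraph k c).lapMatrix ℝ).mulVec f u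
      = branchDeg k c l * f u - (if 0 < l then f u.parent else 0) - ∑ w ∈ u.children, f w :=
    fun u hu => by
      rw [lapMatrix_mulVec_apply_eq hk, (Finset.mem_filter.mp hu).2]
      ring
  have hparent : ∑ u ∈ levelFinset k c l, (if 0 < l then f u.parent else 0)
      = if 0 < l then c (l - 1) * levelSum f (l - 1) else 0 := by
    obtain _ | m := l
    · simp
    · simp only [Nat.succ_pos, if_true, Nat.add_sub_cancel]
      exact sum_levelFinset_succ_parent f hl
  have hchildren : ∑ u ∈ levelFinset k c l, ∑ w ∈ u.children, f w
      = if l + 1 < k then levelSum f (l + 1) else 0 := by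
    rw [← sum_levelFinset_succ]
    split_ifs with hl'
    · rfl
    · rw [levelFinset_eq_empty (by omega), Finset.sum_empty]
  rw [levelSum, Finset.sum_congr rfl hlevel, Finset.sum_sub_distrib, Finset.sum_sub_distrib,
    ← Finset.mul_sum, hparent, hchildren]
  rfl

end LevelSums

def leafCount (k : ℕ) (c : ℕ → ℕ) (l : ℕ) : ℕ := ∏ i ∈ Finset.Ico l (k - 1), c i

lemma leafCount_eq_mul {k l : ℕ} {c : ℕ → ℕ} (hl : l + 1 < k) :
    leafCount k c l = c l * leafCount k c (l + 1) :=
  Finset.prod_eq_prod_Ico_succ_bot (by omega) c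

lemma leafCount_ne_zero {k : ℕ} {c : ℕ → ℕ} (hc : ∀ l, l ≤ k - 2 → 1 ≤ c l) (l : ℕ) :
    leafCount k c l ≠ 0 :=
  Finset.prod_ne_zero_iff.mpr fun i hi => by
    have := hc i (by have := (Finset.mem_Ico.mp hi).2; omega)
    omega

lemma leafCount_mul_recurrence {k l : ℕ} {c : ℕ → ℕ} {d σ : ℕ → ℝ} {lam : ℝ} (hl : l < k)
    (hσ : lam * σ l = d l * σ l - (if 0 < l then c (l - 1) * σ (l - 1) else 0)
      - (if l + 1 < k then σ (l + 1) else 0)) :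
    lam * (leafCount k c l * σ l) = d l * (leafCount k c l * σ l)
      - (if 0 < l then leafCount k c (l - 1) * σ (l - 1) else 0)
      - (if l + 1 < k then c l * (leafCount k c (l + 1) * σ (l + 1)) else 0) := by
  have hparent : (if 0 < l then (leafCount k c (l - 1) : ℝ) * σ (l - 1) else 0)
      = leafCount k c l * (if 0 < l then c (l - 1) * σ (l - 1) else 0) := by
    split_ifs with h
    · rw [leafCount_eq_mul (l := l - 1) (by omega), Nat.sub_add_cancel h]
      push_cast
      ring
    · ring
  have hchild : (if l + 1 < k then c l * ((leafCount k c (l + 1) : ℝ) * σ (l + 1)) else 0)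
      = leafCount k c l * (if l + 1 < k then σ (l + 1) else 0) := by
    split_ifs with h
    · rw [leafCount_eq_mul h]
      push_cast
      ring
    · ring
  rw [hparent, hchild, mul_left_comm, hσ]
  ring

/-- if a Laplacian eigenfunction does not vanish at the root, then the same
eigenvalue admits a nonzero stratified eigenfunction. -/
theorem exists_stratified_eigenfunction (k : ℕ) (hk : 2 ≤ k) (c : ℕ → ℕ)
    (hc : ∀ l, l ≤ k - 2 → 1 ≤ c l) (lam : ℝ) (f : BTVert k c → ℝ)
    (hf : ((btGraph k c).lapMatrix ℝ).mulVec f = lam • f)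
    (hroot : f (btRoot k c (by omega)) ≠ 0) :
    ∃ g : BTVert k c → ℝ, g ≠ 0 ∧ Stratified g ∧
      ((btGraph k c).lapMatrix ℝ).mulVec g = lam • g := by
  have hσ : ∀ l < k, lam * levelSum f l = branchDeg k c l * levelSum f l
      - (if 0 < l then c (l - 1) * levelSum f (l - 1) else 0)
      - (if l + 1 < k then levelSum f (l + 1) else 0) := fun l hl => by
    rw [← levelSum_lapMatrix_mulVec hk f hl, hf, levelSum, levelSum, Finset.mul_sum]
    rfl
  set h : ℕ → ℝ := fun l => leafCount k c l * levelSum f l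
  refine ⟨fun v => h v.1.val, ?_, fun u v huv => by simp only [huv], ?_⟩
  · intro hg
    have hg_root := congrFun hg (btRoot k c (by omega))
    simp only [h, btRoot, levelSum, levelFinset_zero (by omega : 0 < k), Finset.sum_singleton,
      Pi.zero_apply, mul_eq_zero, Nat.cast_eq_zero, leafCount_ne_zero hc, false_or] at hg_root
    exact hroot hg_root
  · funext v
    rw [lapMatrix_mulVec_comp_level hk, Pi.smul_apply, smul_eq_mul]
    exact (leafCount_mul_recurrence (d := fun l => branchDeg k c l) (σ := levelSum f) v.1.isLt
      (hσ _ v.1.isLt)).symm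
end

section
/- Let T be a balanced tree with k levels (k ≥ 2) and L its graph Laplacian. Suppose f is a function on the vertices with Lf = λf that vanishes at every vertex of level l and at every vertex of level l+1, for some 0 ≤ l ≤ k−2. Then f vanishes at every vertex of level j for all 0 ≤ j ≤ l; in particular f(root) = 0. -/
/-!
Evaluate the eigenvalue equation `Lf = λf` at a vertex `v` where `f` vanishes: it reads
`∑_{u ∼ v} f u = 0`. If moreover `f` vanishes at all children of `v`, the only surviving term is
the value at the parent of `v`, which is therefore `0`. Hence vanishing on levels `j + 1` and
`j + 2` forces vanishing on level `j` (every vertex above the last level has a child), and a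
downward induction from the pair of levels `l, l + 1` reaches the root.
-/

open scoped Classical

theorem SimpleGraph.apply_eq_zero_of_lapMatrix_mulVec_eq_smul {V R : Type*} [Fintype V]
    [DecidableEq V] [NonAssocRing R] (G : SimpleGraph V) [DecidableRel G.Adj] {lam : R}
    {f : V → R} (hf : (G.lapMatrix R).mulVec f = lam • f) {v p : V} (hvp : G.Adj v p)
    (hv : f v = 0) (hneighbors : ∀ u, G.Adj v u → u ≠ p → f u = 0) : f p = 0 := by
  have heq := congrFun hf v
  rw [SimpleGraph.lapMatrix_mulVec_apply, Pi.smul_apply, smul_eq_mul, hv, mul_zero, mul_zero,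
    zero_sub, neg_eq_zero] at heq
  rwa [Finset.sum_eq_single_of_mem p (by simpa using hvp)
    fun u hu hup => hneighbors u (by simpa using hu) hup] at heq

section BalancedTree

variable {k : ℕ} {c : ℕ → ℕ}

theorem BTVert.ext {a b : BTVert k c} (hlevel : a.1 = b.1)
    (hlabel : ∀ i : Fin a.1.val, a.2 i = b.2 ⟨i.val, hlevel ▸ i.isLt⟩) : a = b := by
  obtain ⟨la, fa⟩ := a
  obtain ⟨lb, fb⟩ := b
  obtain rfl : la = lb := hlevel
  simp only [Sigma.mk.inj_iff, heq_eq_eq, true_and]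
  exact funext hlabel

theorem IsParentOf.unique {p q v : BTVert k c} (hp : IsParentOf p v) (hq : IsParentOf q v) :
    p = q := by
  obtain ⟨hplevel, hplabel⟩ := hp
  obtain ⟨hqlevel, hqlabel⟩ := hq
  exact BTVert.ext (Fin.ext (by omega)) fun i =>
    (hplabel i).symm.trans (hqlabel ⟨i.val, by omega⟩)

theorem exists_isParentOf (p : BTVert k c) (hlevel : p.1.val + 1 < k) (hc : 1 ≤ c p.1.val) :
    ∃ v, IsParentOf p v := by
  refine ⟨⟨⟨p.1.val + 1, hlevel⟩, fun i =>
    if h : i.val < p.1.val then p.2 ⟨i.val, h⟩ else ⟨0, ?_⟩⟩,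
    rfl, fun i => dif_pos i.isLt⟩
  have : i.val < p.1.val + 1 := i.isLt
  rwa [show i.val = p.1.val by omega]

def VanishesOnLevel (f : BTVert k c → ℝ) (j : ℕ) : Prop :=
  ∀ v : BTVert k c, v.1.val = j → f v = 0

theorem VanishesOnLevel.of_succ_of_succ_succ {lam : ℝ} {f : BTVert k c → ℝ}
    (hf : ((btGraph k c).lapMatrix ℝ).mulVec f = lam • f) {j : ℕ} (hj : j + 1 < k)
    (hc : 1 ≤ c j) (hsucc : VanishesOnLevel f (j + 1))
    (hsucc_succ : VanishesOnLevel f (j + 2)) : VanishesOnLevel f j := by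
  rintro p rfl
  obtain ⟨v, hpv⟩ := exists_isParentOf p hj hc
  refine (btGraph k c).apply_eq_zero_of_lapMatrix_mulVec_eq_smul hf (Or.inr hpv)
    (hsucc v hpv.1.symm) fun u hvu hup => ?_
  rcases hvu with hchild | hparent
  · exact hsucc_succ u (by have := hchild.1; have := hpv.1; omega)
  · exact absurd (hparent.unique hpv) hup

end BalancedTree

/-- a Laplacian eigenfunction vanishing on two consecutive levels `l`, `l+1`
vanishes on every level `j ≤ l`; in particular at the root. -/
theorem eigenfunction_vanishing_two_levels (k : ℕ) (hk : 2 ≤ k) (c : ℕ → ℕ)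
    (hc : ∀ l, l ≤ k - 2 → 1 ≤ c l) (lam : ℝ) (f : BTVert k c → ℝ)
    (hf : ((btGraph k c).lapMatrix ℝ).mulVec f = lam • f) (l : ℕ) (hl : l ≤ k - 2)
    (h1 : ∀ v : BTVert k c, v.1.val = l → f v = 0)
    (h2 : ∀ v : BTVert k c, v.1.val = l + 1 → f v = 0) :
    (∀ j ≤ l, ∀ v : BTVert k c, v.1.val = j → f v = 0) ∧
      f (btRoot k c (by omega)) = 0 := by
  have hpair : ∀ j ≤ l, VanishesOnLevel f j ∧ VanishesOnLevel f (j + 1) := by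
    refine fun j => Nat.decreasingInduction (fun j hjl ih => ?_) ⟨h1, h2⟩
    exact ⟨ih.1.of_succ_of_succ_succ hf (by omega) (hc j (by omega)) ih.2, ih.1⟩
  exact ⟨fun j hj => (hpair j hj).1, (hpair 0 (Nat.zero_le l)).1 _ rfl⟩
end
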